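/- Let Q ∈ ℝ^{m×t}, U ∈ ℝ^{m×s} with ‖I - QᵀQ‖₂ ≤ ω < 1 and ‖U‖₂ ≤ 2. Suppose Ω = UᵀU + ΔΩ, Y = QᵀU + ΔY, and YdᵀYd = Ω - YᵀY + F + C, with ‖ΔΩ‖₂ ≤ δ₁‖U‖₂², ‖ΔY‖₂ ≤ δ₂‖U‖₂, ‖F‖₂ ≤ δ₃‖U‖₂², ‖C‖₂ ≤ δ₄‖U‖₂². Then YdᵀYd = Uᵀ(I - QQᵀ)(I - QQᵀ)U + M̃ with ‖M̃‖₂ ≤ 4(δ₁ + 2√2 δ₂ + δ₃ + δ₄ + 2ω). -/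

import Mathlib

/-!
Put `W = Qᵀ U`, `E = ΔΩ + F + C` and `M = Ydᵀ Yd - Uᵀ (I - Q Qᵀ)² U`. Expanding the products,
`M = E + Wᵀ (I - Qᵀ Q) W + (Wᵀ W - Yᵀ Y)`, and `M` is symmetric, so `‖M‖₂` is the largest value of
`|xᵀ M x|` on unit vectors. There the first two terms are at most `4 (δ₁ + δ₃ + δ₄)` and
`‖I - Qᵀ Q‖ ‖W‖² ≤ 8 ω`, because `‖Q‖² ≤ 1 + ω ≤ 2`. The last one is `‖W x‖² - ‖Y x‖²`, and
`|‖W x‖ - ‖Y x‖| ≤ ‖ΔY x‖ ≤ 2 δ₂`, so it is at most `2 · 2√2 · 2 δ₂` whenever both norms are at most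
`2√2`. Bounding `ΔYᵀ ΔY` separately would cost an extra `δ₂²`; instead, if `‖Y x‖ > 2√2`, then
`Ydᵀ Yd ⪰ 0`, i.e. `‖Y x‖² ≤ ‖U x‖² + xᵀ E x`, forces `xᵀ E x > 4 ≥ ‖U x‖²`, and
`xᵀ M x ≥ -‖U x‖² - 8 ω` is again within the bound.
-/

open Matrix

/-- Spectral norm (largest singular value) of a real matrix. -/
noncomputable def sn {m n : ℕ} (A : Matrix (Fin m) (Fin n) ℝ) : ℝ :=
  sSup {c | ∃ x : EuclideanSpace ℝ (Fin n), ‖x‖ = 1 ∧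
    c = ‖(WithLp.equiv 2 (Fin m → ℝ)).symm (A.mulVec ((WithLp.equiv 2 (Fin n → ℝ)) x))‖}

/-- Smallest singular value of a real matrix. -/
noncomputable def smin {m n : ℕ} (A : Matrix (Fin m) (Fin n) ℝ) : ℝ :=
  sInf {c | ∃ x : EuclideanSpace ℝ (Fin n), ‖x‖ = 1 ∧
    c = ‖(WithLp.equiv 2 (Fin m → ℝ)).symm (A.mulVec ((WithLp.equiv 2 (Fin n → ℝ)) x))‖}

/-- Smallest eigenvalue (Rayleigh quotient infimum) of a square real matrix. -/
noncomputable def lmin {n : ℕ} (A : Matrix (Fin n) (Fin n) ℝ) : ℝ :=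
  sInf {c | ∃ x : EuclideanSpace ℝ (Fin n), ‖x‖ = 1 ∧
    c = (inner ℝ x ((WithLp.equiv 2 (Fin n → ℝ)).symm (A.mulVec ((WithLp.equiv 2 (Fin n → ℝ)) x))) : ℝ)}


open scoped RealInnerProductSpace Matrix.Norms.L2Operator

theorem sn_eq_l2_opNorm {m n : ℕ} (A : Matrix (Fin m) (Fin n) ℝ) : sn A = ‖A‖ := by
  rw [l2_opNorm_def, ← ContinuousLinearMap.sSup_sphere_eq_norm]
  refine congrArg sSup (Set.ext fun c => ?_)
  simp only [Set.mem_ofPred_eq, Set.mem_image, mem_sphere_zero_iff_norm]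
  exact exists_congr fun x => and_congr_right' eq_comm

theorem ContinuousLinearMap.norm_le_of_abs_inner_self_le {E : Type*} [NormedAddCommGroup E]
    [InnerProductSpace ℝ E] {T : E →L[ℝ] E} (hT : (T : E →ₗ[ℝ] E).IsSymmetric) {c : ℝ}
    (hc : 0 ≤ c) (h : ∀ x, ‖x‖ = 1 → |⟪T x, x⟫| ≤ c) : ‖T‖ ≤ c := by
  rw [T.norm_eq_iSup_rayleighQuotient hT]
  refine ciSup_le fun x => ?_
  rcases eq_or_ne x 0 with rfl | hx
  · simpa using hc
  · have hunit : ‖‖x‖⁻¹ • x‖ = 1 := norm_smul_inv_norm hx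
    rw [← T.rayleigh_smul x (inv_ne_zero (norm_ne_zero_iff.2 hx)), rayleighQuotient,
      reApplyInnerSelf_apply, hunit, one_pow, div_one, RCLike.re_to_real]
    exact h _ hunit

theorem sq_sub_sq_le_of_abs_sub_le {a b K η : ℝ} (ha : 0 ≤ a) (hb : 0 ≤ b) (haK : a ≤ K)
    (hab : |a - b| ≤ η) : a ^ 2 - b ^ 2 ≤ 2 * K * η := by
  rcases le_total a b with h | h
  · nlinarith [(abs_nonneg _).trans hab]
  · nlinarith [(abs_le.mp hab).2]

theorem abs_add_add_sq_sub_sq_le {a b g e r K η ε ρ : ℝ} (ha : 0 ≤ a) (hb : 0 ≤ b)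
    (haK : a ≤ K) (hab : |a - b| ≤ η) (hg : 2 * g ≤ K ^ 2) (hbg : b ^ 2 ≤ g + e)
    (he : |e| ≤ ε) (hr : |r| ≤ ρ) :
    |e + r + (a ^ 2 - b ^ 2)| ≤ ε + 2 * K * η + ρ := by
  have hKη : 0 ≤ 2 * K * η :=
    mul_nonneg (mul_nonneg zero_le_two (ha.trans haK)) ((abs_nonneg _).trans hab)
  have hupper := sq_sub_sq_le_of_abs_sub_le ha hb haK hab
  rw [abs_le] at he hr ⊢
  refine ⟨?_, by linarith⟩
  rcases le_or_gt b K with hbK | hKb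
  · linarith [sq_sub_sq_le_of_abs_sub_le hb ha hbK ((abs_sub_comm b a).trans_le hab)]
  · have : K ^ 2 < b ^ 2 := by nlinarith
    linarith [sq_nonneg a]

namespace Matrix

theorem transpose_mul_self_sub_projected_eq {k l m n : Type*} [Fintype k] [Fintype l]
    [Fintype m] [DecidableEq l] [DecidableEq m] {Q : Matrix m l ℝ} {U : Matrix m n ℝ} {Y : Matrix l n ℝ} {Yd : Matrix k n ℝ} {E : Matrix n n ℝ}
    (hYd : Ydᵀ * Yd = Uᵀ * U + E - Yᵀ * Y) :
    Ydᵀ * Yd - Uᵀ * (1 - Q * Qᵀ) * (1 - Q * Qᵀ) * U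
      = E + (Qᵀ * U)ᵀ * ((1 - Qᵀ * Q) * (Qᵀ * U)) + ((Qᵀ * U)ᵀ * (Qᵀ * U) - Yᵀ * Y) := by
  rw [hYd]
  simp only [transpose_mul, transpose_transpose, Matrix.mul_sub, Matrix.sub_mul, Matrix.mul_one,
    Matrix.one_mul, Matrix.mul_assoc]
  abel

variable {k l m n : Type*} [Fintype k] [Fintype l] [Fintype m] [Fintype n] [DecidableEq n]

theorem norm_toEuclideanLin_le (A : Matrix m n ℝ) (x : EuclideanSpace ℝ n) :
    ‖toEuclideanLin A x‖ ≤ ‖A‖ * ‖x‖ :=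
  A.l2_opNorm_mulVec x

theorem abs_inner_toEuclideanLin_self_le (A : Matrix n n ℝ) (x : EuclideanSpace ℝ n) :
    |⟪toEuclideanLin A x, x⟫| ≤ ‖A‖ * ‖x‖ ^ 2 :=
  calc |⟪toEuclideanLin A x, x⟫| ≤ ‖toEuclideanLin A x‖ * ‖x‖ := abs_real_inner_le_norm _ _
    _ ≤ ‖A‖ * ‖x‖ * ‖x‖ := by gcongr; exact norm_toEuclideanLin_le A x
    _ = ‖A‖ * ‖x‖ ^ 2 := by ring

theorem inner_toEuclideanLin_transpose_mul [DecidableEq l] [DecidableEq m] (B : Matrix l m ℝ)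
    (A : Matrix l n ℝ) (x : EuclideanSpace ℝ n) (y : EuclideanSpace ℝ m) :
    ⟪toEuclideanLin (Bᵀ * A) x, y⟫ = ⟪toEuclideanLin A x, toEuclideanLin B y⟫ := by
  rw [toLpLin_mul_same, LinearMap.comp_apply, ← conjTranspose_eq_transpose_of_trivial,
    toEuclideanLin_conjTranspose_eq_adjoint, LinearMap.adjoint_inner_left]

theorem inner_toEuclideanLin_transpose_mul_self [DecidableEq m] (B : Matrix m n ℝ)
    (x : EuclideanSpace ℝ n) : ⟪toEuclideanLin (Bᵀ * B) x, x⟫ = ‖toEuclideanLin B x‖ ^ 2 := by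
  rw [inner_toEuclideanLin_transpose_mul, real_inner_self_eq_norm_sq]

theorem l2_opNorm_sq_le_one_add (Q : Matrix m n ℝ) : ‖Q‖ ^ 2 ≤ 1 + ‖1 - Qᵀ * Q‖ := by
  have hone : ‖(1 : Matrix n n ℝ)‖ ≤ 1 := by
    rw [cstar_norm_def, map_one]; exact ContinuousLinearMap.norm_id_le
  calc ‖Q‖ ^ 2 = ‖Qᵀ * Q‖ := by
        rw [sq, ← l2_opNorm_conjTranspose_mul_self, conjTranspose_eq_transpose_of_trivial]
    _ = ‖1 - (1 - Qᵀ * Q)‖ := by rw [sub_sub_cancel]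
    _ ≤ 1 + ‖1 - Qᵀ * Q‖ := (norm_sub_le _ _).trans (by gcongr)

theorem IsHermitian.l2_opNorm_le_of_abs_inner_self_le {M : Matrix n n ℝ} (hM : M.IsHermitian)
    {c : ℝ} (hc : 0 ≤ c)
    (h : ∀ x : EuclideanSpace ℝ n, ‖x‖ = 1 → |⟪toEuclideanLin M x, x⟫| ≤ c) : ‖M‖ ≤ c :=
  ContinuousLinearMap.norm_le_of_abs_inner_self_le (isSymmetric_toEuclideanLin_iff.2 hM) hc h

theorem l2_opNorm_gram_sub_projected_gram_le [DecidableEq k] [DecidableEq l] [DecidableEq m]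
    {Q : Matrix m l ℝ} {U : Matrix m n ℝ} {Y : Matrix l n ℝ} {Yd : Matrix k n ℝ}
    {E : Matrix n n ℝ} (hYd : Ydᵀ * Yd = Uᵀ * U + E - Yᵀ * Y) {K : ℝ}
    (hU : 2 * ‖U‖ ^ 2 ≤ K ^ 2) (hQU : ‖Qᵀ * U‖ ≤ K) :
    ‖Ydᵀ * Yd - Uᵀ * (1 - Q * Qᵀ) * (1 - Q * Qᵀ) * U‖
      ≤ ‖E‖ + 2 * K * ‖Y - Qᵀ * U‖ + ‖1 - Qᵀ * Q‖ * K ^ 2 := by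
  have hherm : (Ydᵀ * Yd - Uᵀ * (1 - Q * Qᵀ) * (1 - Q * Qᵀ) * U).IsHermitian := by
    simp only [IsHermitian, conjTranspose_eq_transpose_of_trivial, transpose_sub, transpose_mul,
      transpose_transpose, transpose_one, Matrix.mul_assoc]
  have hK : 0 ≤ K := (norm_nonneg _).trans hQU
  refine hherm.l2_opNorm_le_of_abs_inner_self_le (by positivity) fun x hx => ?_
  have hgram : ‖toEuclideanLin Y x‖ ^ 2 ≤ ‖toEuclideanLin U x‖ ^ 2 + ⟪toEuclideanLin E x, x⟫ := by
    have := inner_toEuclideanLin_transpose_mul_self Yd x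
    rw [hYd, map_sub, map_add, LinearMap.sub_apply, LinearMap.add_apply, inner_sub_left,
      inner_add_left, inner_toEuclideanLin_transpose_mul_self,
      inner_toEuclideanLin_transpose_mul_self] at this
    linarith [sq_nonneg ‖toEuclideanLin Yd x‖]
  rw [transpose_mul_self_sub_projected_eq hYd]
  set W := Qᵀ * U
  rw [map_add, map_add, map_sub, LinearMap.add_apply, LinearMap.add_apply,
    LinearMap.sub_apply, inner_add_left, inner_add_left, inner_sub_left,
    inner_toEuclideanLin_transpose_mul, inner_toEuclideanLin_transpose_mul_self,
    inner_toEuclideanLin_transpose_mul_self, toLpLin_mul_same, LinearMap.comp_apply]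
  have hWx : ‖toEuclideanLin W x‖ ≤ K :=
    (norm_toEuclideanLin_le W x).trans (by rw [hx, mul_one]; exact hQU)
  have hWYx : |‖toEuclideanLin W x‖ - ‖toEuclideanLin Y x‖| ≤ ‖Y - W‖ := by
    refine (abs_norm_sub_norm_le _ _).trans ?_
    simpa [hx, norm_sub_rev] using norm_toEuclideanLin_le (W - Y) x
  have hUx : 2 * ‖toEuclideanLin U x‖ ^ 2 ≤ K ^ 2 := by
    have : ‖toEuclideanLin U x‖ ≤ ‖U‖ := by simpa [hx] using norm_toEuclideanLin_le U x
    nlinarith [norm_nonneg (toEuclideanLin U x)]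
  have hEx : |⟪toEuclideanLin E x, x⟫| ≤ ‖E‖ := by
    simpa [hx] using abs_inner_toEuclideanLin_self_le E x
  have hr := abs_inner_toEuclideanLin_self_le (1 - Qᵀ * Q) (toEuclideanLin W x)
  refine abs_add_add_sq_sub_sq_le (norm_nonneg _) (norm_nonneg _) hWx hWYx hUx hgram hEx
    (hr.trans ?_)
  gcongr

end Matrix

theorem gram_decomposition_of_Yd_general
    {m t s : ℕ} (Q : Matrix (Fin m) (Fin t) ℝ)
    (U : Matrix (Fin m) (Fin s) ℝ)
    (Ω ΔΩ Yd F C : Matrix (Fin s) (Fin s) ℝ)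
    (Y ΔY : Matrix (Fin t) (Fin s) ℝ)
    (ω δ1 δ2 δ3 δ4 : ℝ)
    (hω1 : ω < 1)
    (hQ : sn ((1 : Matrix (Fin t) (Fin t) ℝ) - Qᵀ * Q) ≤ ω)
    (hU : sn U ≤ 2)
    (hΩ : Ω = Uᵀ * U + ΔΩ) (hΔΩ : sn ΔΩ ≤ δ1 * sn U ^ 2)
    (hY : Y = Qᵀ * U + ΔY) (hΔY : sn ΔY ≤ δ2 * sn U)
    (hYd : Ydᵀ * Yd = Ω - Yᵀ * Y + F + C)
    (hF : sn F ≤ δ3 * sn U ^ 2) (hC : sn C ≤ δ4 * sn U ^ 2)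
    (hδ1 : δ1 ∈ Set.Ioo (0:ℝ) 1) (hδ2 : δ2 ∈ Set.Ioo (0:ℝ) 1)
    (hδ3 : δ3 ∈ Set.Ioo (0:ℝ) 1) (hδ4 : δ4 ∈ Set.Ioo (0:ℝ) 1) :
    ∃ M : Matrix (Fin s) (Fin s) ℝ,
      Ydᵀ * Yd
        = Uᵀ * ((1 : Matrix (Fin m) (Fin m) ℝ) - Q * Qᵀ)
            * ((1 : Matrix (Fin m) (Fin m) ℝ) - Q * Qᵀ) * U + M
      ∧ sn M ≤ 4 * (δ1 + 2 * Real.sqrt 2 * δ2 + δ3 + δ4 + 2 * ω) := by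
  simp only [sn_eq_l2_opNorm] at hQ hU hΔΩ hΔY hF hC ⊢
  have hU2 : ‖U‖ ^ 2 ≤ 4 := by nlinarith [norm_nonneg U]
  have hQt : ‖Qᵀ‖ ≤ √2 := by
    rw [← conjTranspose_eq_transpose_of_trivial, l2_opNorm_conjTranspose]
    exact Real.le_sqrt_of_sq_le (by linarith [Q.l2_opNorm_sq_le_one_add])
  have hQU : ‖Qᵀ * U‖ ≤ 2 * √2 := by
    nlinarith [l2_opNorm_mul Qᵀ U, norm_nonneg Qᵀ, norm_nonneg U]
  have hE : ‖ΔΩ + F + C‖ ≤ 4 * (δ1 + δ3 + δ4) :=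
    calc ‖ΔΩ + F + C‖ ≤ ‖ΔΩ‖ + ‖F‖ + ‖C‖ := norm_add₃_le
      _ ≤ (δ1 + δ3 + δ4) * ‖U‖ ^ 2 := by linarith
      _ ≤ 4 * (δ1 + δ3 + δ4) := by nlinarith [hδ1.1, hδ3.1, hδ4.1]
  have hYQU : ‖Y - Qᵀ * U‖ ≤ 2 * δ2 := by
    rw [hY, add_sub_cancel_left]; nlinarith [hδ2.1]
  refine ⟨_, (add_sub_cancel _ _).symm, ?_⟩
  calc _ ≤ ‖ΔΩ + F + C‖ + 2 * (2 * √2) * ‖Y - Qᵀ * U‖ + ‖1 - Qᵀ * Q‖ * (2 * √2) ^ 2 :=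
        l2_opNorm_gram_sub_projected_gram_le (by rw [hYd, hΩ]; abel)
          (by rw [mul_pow, Real.sq_sqrt zero_le_two]; linarith) hQU
    _ ≤ 4 * (δ1 + δ3 + δ4) + 2 * (2 * √2) * (2 * δ2) + ω * (2 * √2) ^ 2 := by gcongr
    _ = 4 * (δ1 + 2 * √2 * δ2 + δ3 + δ4 + 2 * ω) := by
        rw [mul_pow, Real.sq_sqrt zero_le_two]; ring

theorem gram_decomposition_of_Yd
    {m t s : ℕ} (Q : Matrix (Fin m) (Fin t) ℝ)
    (U : Matrix (Fin m) (Fin s) ℝ)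
    (Ω ΔΩ Yd F C : Matrix (Fin s) (Fin s) ℝ)
    (Y ΔY : Matrix (Fin t) (Fin s) ℝ)
    (ω δ1 δ2 δ3 δ4 : ℝ)
    (hω0 : 0 ≤ ω) (hω1 : ω < 1)
    (hQ : sn ((1 : Matrix (Fin t) (Fin t) ℝ) - Qᵀ * Q) ≤ ω)
    (hU : sn U ≤ 2)
    (hΩ : Ω = Uᵀ * U + ΔΩ) (hΔΩ : sn ΔΩ ≤ δ1 * sn U ^ 2)
    (hY : Y = Qᵀ * U + ΔY) (hΔY : sn ΔY ≤ δ2 * sn U)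
    (hYd : Ydᵀ * Yd = Ω - Yᵀ * Y + F + C)
    (hF : sn F ≤ δ3 * sn U ^ 2) (hC : sn C ≤ δ4 * sn U ^ 2)
    (hδ1 : δ1 ∈ Set.Ioo (0:ℝ) 1) (hδ2 : δ2 ∈ Set.Ioo (0:ℝ) 1)
    (hδ3 : δ3 ∈ Set.Ioo (0:ℝ) 1) (hδ4 : δ4 ∈ Set.Ioo (0:ℝ) 1) :
    ∃ M : Matrix (Fin s) (Fin s) ℝ,
      Ydᵀ * Yd
        = Uᵀ * ((1 : Matrix (Fin m) (Fin m) ℝ) - Q * Qᵀ)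
            * ((1 : Matrix (Fin m) (Fin m) ℝ) - Q * Qᵀ) * U + M
      ∧ sn M ≤ 4 * (δ1 + 2 * Real.sqrt 2 * δ2 + δ3 + δ4 + 2 * ω) :=
  gram_decomposition_of_Yd_general Q U Ω ΔΩ Yd F C Y ΔY ω δ1 δ2 δ3 δ4 hω1 hQ hU hΩ hΔΩ hY hΔY hYd hF
    hC hδ1 hδ2 hδ3 hδ4
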